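/- Let D be a finitely generated abelian group, S a D-graded ring, and f ∈ S homogeneous. Then f is relevant (the degrees of homogeneous divisors of powers of f generate a finite-index subgroup of D) if and only if the localization S_f is periodic, i.e., the degrees of the homogeneous units of S_f generate a finite-index subgroup of D. -/
import Mathlib

/-- A homogeneous element `f` of a `D`-graded ring is *relevant* if the degrees of all
homogeneous divisors of powers of `f` generate a subgroup of finite index in `D`. -/
def RelevantDiv {D A : Type*} [AddCommGroup D] [CommRing A]
    (𝒜 : D → AddSubgroup A) (f : A) : Prop :=
  (∃ d, f ∈ 𝒜 d) ∧
    (AddSubgroup.closure {d : D | ∃ g ∈ 𝒜 d, ∃ n : ℕ, g ∣ f ^ n}).FiniteIndex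

/-- If the image of `g` in `S_f` is a unit, then `g` divides a power of `f`. -/
lemma dvd_pow_of_isUnit_away {S : Type*} [CommRing S] (f g : S)
    (h : IsUnit (algebraMap S (Localization.Away f) g)) : ∃ n : ℕ, g ∣ f ^ n := by
  obtain ⟨v, hv⟩ := isUnit_iff_exists_inv.mp h
  obtain ⟨⟨h', s⟩, hs⟩ := IsLocalization.surj (Submonoid.powers f) v
  obtain ⟨m, hm⟩ := s.2
  have key : algebraMap S (Localization.Away f) (g * h') =
      algebraMap S (Localization.Away f) (f ^ m) := by
    have hm' : f ^ m = (s : S) := hm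
    rw [map_mul, ← hs, ← mul_assoc, hv, one_mul, hm']
  obtain ⟨c, hc⟩ := IsLocalization.exists_of_eq (M := Submonoid.powers f) key
  obtain ⟨k, hk⟩ := c.2
  have hk' : f ^ k = (c : S) := hk
  have this1 : f ^ k * (g * h') = f ^ k * f ^ m := by rw [hk']; exact hc
  refine ⟨k + m, h' * f ^ k, ?_⟩
  rw [pow_add]
  linear_combination -this1

/-- `invSelf f` is a unit in `S_f` (its inverse is the image of `f`);
here stated as the product with the image of `f` being `1`. -/
lemma away_mul_invSelf {S : Type*} [CommRing S] (f : S) :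
    IsUnit ((IsLocalization.Away.invSelf f : Localization.Away f)) := by
  refine isUnit_iff_exists_inv.mpr ⟨algebraMap S (Localization.Away f) f, ?_⟩
  rw [mul_comm]
  exact IsLocalization.Away.mul_invSelf f

/-- Let `f` be homogeneous of degree `df` in a ring `S` graded by a finitely
generated abelian group `D`.  Then `f` is relevant if and only if the localization `S_f`
is periodic: the degrees of the homogeneous units of `S_f` generate a finite-index
subgroup of `D`.  (A homogeneous element of `S_f` of degree `e` is one of the form
`g / f^n` with `g ∈ S_{e + n·df}`.) -/
theorem stmt_8 {D S : Type*} [AddCommGroup D] [AddGroup.FG D] [DecidableEq D]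
    [CommRing S] (𝒜 : D → AddSubgroup S) [GradedRing 𝒜]
    (f : S) (df : D) (hfd : f ∈ 𝒜 df) :
    RelevantDiv 𝒜 f ↔
      (AddSubgroup.closure {e : D | ∃ (g : S) (n : ℕ), g ∈ 𝒜 (e + n • df) ∧
        IsUnit (algebraMap S (Localization.Away f) g *
          (IsLocalization.Away.invSelf f : Localization.Away f) ^ n)}).FiniteIndex := by
  set A : Set D := {d : D | ∃ g ∈ 𝒜 d, ∃ n : ℕ, g ∣ f ^ n} with hA
  set B : Set D := {e : D | ∃ (g : S) (n : ℕ), g ∈ 𝒜 (e + n • df) ∧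
        IsUnit (algebraMap S (Localization.Away f) g *
          (IsLocalization.Away.invSelf f : Localization.Away f) ^ n)} with hB
  have hclos : AddSubgroup.closure A = AddSubgroup.closure B := by
    apply le_antisymm
    · rw [AddSubgroup.closure_le]
      intro d hd
      obtain ⟨g, hg, n, hdvd⟩ := hd
      apply AddSubgroup.subset_closure
      refine ⟨g, 0, by simpa using hg, ?_⟩
      rw [pow_zero, mul_one]
      exact isUnit_of_dvd_unit (map_dvd _ hdvd)
        (by rw [map_pow]; exact (IsLocalization.Away.algebraMap_isUnit f).pow n)
    · rw [AddSubgroup.closure_le]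
      intro e he
      obtain ⟨g, n, hg, hu⟩ := he
      have hdf : df ∈ AddSubgroup.closure A :=
        AddSubgroup.subset_closure ⟨f, hfd, 1, by rw [pow_one]⟩
      have hgu : IsUnit (algebraMap S (Localization.Away f) g) :=
        isUnit_of_mul_isUnit_left (y := (IsLocalization.Away.invSelf f :
          Localization.Away f) ^ n) hu
      obtain ⟨m, hdvd⟩ := dvd_pow_of_isUnit_away f g hgu
      have h1 : e + n • df ∈ AddSubgroup.closure A :=
        AddSubgroup.subset_closure ⟨g, hg, m, hdvd⟩
      have h2 : n • df ∈ AddSubgroup.closure A := nsmul_mem hdf n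
      have := sub_mem h1 h2
      simpa using this
  have hclos2 : (AddSubgroup.closure A).FiniteIndex ↔
      (AddSubgroup.closure B).FiniteIndex := by rw [hclos]
  constructor
  · rintro ⟨-, h⟩
    exact hclos2.mp h
  · intro h
    exact ⟨⟨df, hfd⟩, hclos2.mpr h⟩
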